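/- arXiv:1702.01744 — 2 statements merged into one kernel-verified Lean document; each statement's English description precedes it below -/
import Mathlib

section
/- For n ≥ 1, the number of labeled plane trees on n+1 vertices (with any vertex as root) equals (2n)!/n!. -/
/-- `p` is the parent function of a rooted tree on `Fin m` with (arbitrary) root `r`:
the unique fixed point of `p` is `r`, and every vertex eventually reaches it. -/
def IsTreeRootedAt (m : ℕ) (p : Fin m → Fin m) (r : Fin m) : Prop :=
  (∀ v, p v = v ↔ v = r) ∧ ∀ v, ∃ l, (p^[l]) v = r

/-- `rk` linearly orders the children of every vertex, by mapping the children of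
each vertex `x` bijectively onto `{0, …, (#children of x) - 1}`; vertices that are
children of nobody are normalized to have rank `0`. -/
def IsPlaneOrder (m : ℕ) (p : Fin m → Fin m) (rk : Fin m → ℕ) : Prop :=
  (∀ x : Fin m, Set.BijOn rk {v | p v = x ∧ v ≠ x}
      (Set.Iio ({v : Fin m | p v = x ∧ v ≠ x}.ncard))) ∧
  ∀ v, p v = v → rk v = 0

/-! Rotation correspondence: a plane tree rooted at `r` is the same thing as a binary tree on the
remaining vertices, whose left child is the first child and whose right child is the next sibling.
So for each of the `n + 1` roots there are `catalan n` shapes and `n !` labellings, and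
`(n + 1) * catalan n * n ! = (2 * n)! / n !`. -/

theorem Set.InjOn.bijOn_Iio_ncard {α : Type*} {s : Set α} {f : α → ℕ} (hinj : Set.InjOn f s)
    (hs : s.Finite) (hstep : ∀ v ∈ s, ∀ j, f v = j + 1 → ∃ w ∈ s, f w = j) :
    Set.BijOn f s (Set.Iio s.ncard) := by
  have hdown : ∀ i, ∀ v ∈ s, ∀ j, f v = j + i → j ∈ f '' s := by
    intro i
    induction i with
    | zero => exact fun v hv j h => ⟨v, hv, h⟩
    | succ i ih =>
      intro v hv j h
      obtain ⟨w, hw, hwj⟩ := hstep v hv (j + i) (by omega)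
      exact ih w hw j hwj
  have hsub : f '' s ⊆ Set.Iio s.ncard := by
    rintro _ ⟨v, hv, rfl⟩
    have hIic : Set.Iic (f v) ⊆ f '' s := fun j hj => hdown (f v - j) v hv j (by
      rw [Set.mem_Iic] at hj
      omega)
    have := Set.ncard_le_ncard hIic (hs.image f)
    rw [Set.ncard_Iic_nat, hinj.ncard_image] at this
    exact this
  have himage : f '' s = Set.Iio s.ncard :=
    Set.eq_of_subset_of_ncard_le hsub (by rw [Set.ncard_Iio_nat, hinj.ncard_image])
      (Set.finite_Iio _)
  exact ⟨fun v hv => hsub ⟨v, hv, rfl⟩, hinj, himage.symm.subset⟩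

namespace PlaneTree

variable {V : Type*} (p : V → V) (rk : V → ℕ)

def children (x : V) : Set V := {v | p v = x ∧ v ≠ x}

def subtree (x : V) : Set V := {v | ∃ l, p^[l] v = x}

def forest (x : V) (k : ℕ) : Set V := {v | ∃ c ∈ children p x, k ≤ rk c ∧ v ∈ subtree p c}

variable {p rk} {x a c v : V} {k : ℕ}

theorem mem_subtree_self (x : V) : x ∈ subtree p x := ⟨0, rfl⟩

theorem subtree_subset_of_mem (hv : v ∈ subtree p x) : subtree p v ⊆ subtree p x := by
  obtain ⟨l, hl⟩ := hv
  rintro w ⟨l', hl'⟩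
  exact ⟨l + l', by rw [Function.iterate_add_apply, hl', hl]⟩

theorem subtree_subset_of_mem_children (hc : c ∈ children p x) : subtree p c ⊆ subtree p x :=
  subtree_subset_of_mem ⟨1, hc.1⟩

theorem apply_mem_subtree (hv : v ∈ subtree p x) (hvx : v ≠ x) : p v ∈ subtree p x := by
  obtain ⟨l, hl⟩ := hv
  obtain ⟨l, rfl⟩ := Nat.exists_eq_succ_of_ne_zero (fun h : l = 0 => hvx (by simpa [h] using hl))
  exact ⟨l, hl⟩

theorem mem_subtree_or_mem_subtree {y : V} (hx : v ∈ subtree p x) (hy : v ∈ subtree p y) :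
    x ∈ subtree p y ∨ y ∈ subtree p x := by
  obtain ⟨i, hi⟩ := hx
  obtain ⟨j, hj⟩ := hy
  rcases le_total i j with hij | hij
  · refine Or.inl ⟨j - i, ?_⟩
    rw [← hi, ← Function.iterate_add_apply, Nat.sub_add_cancel hij, hj]
  · refine Or.inr ⟨i - j, ?_⟩
    rw [← hj, ← Function.iterate_add_apply, Nat.sub_add_cancel hij, hi]

theorem exists_mem_children_of_mem_subtree (hv : v ∈ subtree p x) (hvx : v ≠ x) :
    ∃ c ∈ children p x, v ∈ subtree p c := by
  classical
  have hl := Nat.find_spec hv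
  have hpos : Nat.find hv ≠ 0 := fun h => hvx (by simpa [h] using hl)
  obtain ⟨l, hl'⟩ := Nat.exists_eq_succ_of_ne_zero hpos
  rw [hl', Function.iterate_succ_apply'] at hl
  exact ⟨p^[l] v, ⟨hl, fun h => Nat.find_min hv (by omega) h⟩, l, rfl⟩

theorem subtree_subset_forest (hc : c ∈ children p x) (hk : k ≤ rk c) :
    subtree p c ⊆ forest p rk x k :=
  fun _ hv => ⟨c, hc, hk, hv⟩

theorem forest_subset_subtree : forest p rk x k ⊆ subtree p x := by
  rintro v ⟨c, hc, -, hv⟩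
  exact subtree_subset_of_mem_children hc hv

theorem forest_succ_subset : forest p rk x (k + 1) ⊆ forest p rk x k := by
  rintro v ⟨c, hc, hk, hv⟩
  exact ⟨c, hc, by omega, hv⟩

theorem mem_subtree_iff : v ∈ subtree p x ↔ v = x ∨ v ∈ forest p rk x 0 := by
  refine ⟨fun hv => ?_, ?_⟩
  · by_cases hvx : v = x
    · exact Or.inl hvx
    · obtain ⟨c, hc, hvc⟩ := exists_mem_children_of_mem_subtree hv hvx
      exact Or.inr ⟨c, hc, Nat.zero_le _, hvc⟩
  · rintro (rfl | hv)
    exacts [mem_subtree_self v, forest_subset_subtree hv]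

end PlaneTree

open PlaneTree

namespace IsTreeRootedAt

variable {m : ℕ} {p : Fin m → Fin m} {rk : Fin m → ℕ} {r x a c v : Fin m} {k : ℕ}

theorem root_unique {r' : Fin m} (ht : IsTreeRootedAt m p r) (ht' : IsTreeRootedAt m p r') :
    r' = r :=
  (ht.1 r').1 ((ht'.1 r').2 rfl)

theorem iterate_root (ht : IsTreeRootedAt m p r) (l : ℕ) : p^[l] r = r :=
  Function.iterate_fixed ((ht.1 r).2 rfl) l

theorem eq_root_of_iterate (ht : IsTreeRootedAt m p r) {l : ℕ} (hl : 0 < l)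
    (h : p^[l] v = v) : v = r := by
  obtain ⟨j, hj⟩ := ht.2 v
  have hperiodic : p^[l * j] v = v := (Function.IsPeriodicPt.mul_const h j).eq
  rw [← hperiodic, ← Nat.sub_add_cancel (Nat.le_mul_of_pos_left j hl),
    Function.iterate_add_apply, hj, ht.iterate_root]

theorem not_mem_subtree_of_mem_children (ht : IsTreeRootedAt m p r) (hc : c ∈ children p x) :
    x ∉ subtree p c := by
  rintro ⟨l, hl⟩
  have hx : x = r := ht.eq_root_of_iterate (Nat.succ_pos l)
    (by rw [Function.iterate_succ_apply', hl, hc.1])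
  subst hx
  exact hc.2 (by rw [← hl, ht.iterate_root])

theorem disjoint_subtree (ht : IsTreeRootedAt m p r) {c₁ c₂ : Fin m} (hc₁ : c₁ ∈ children p x)
    (hc₂ : c₂ ∈ children p x) (hne : c₁ ≠ c₂) : Disjoint (subtree p c₁) (subtree p c₂) := by
  rw [Set.disjoint_left]
  intro v hv₁ hv₂
  -- the parent `x` of the lower of the two siblings would lie in the subtree of the other
  rcases mem_subtree_or_mem_subtree hv₁ hv₂ with h | h
  · exact ht.not_mem_subtree_of_mem_children hc₂ (hc₁.1 ▸ apply_mem_subtree h hne)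
  · exact ht.not_mem_subtree_of_mem_children hc₁ (hc₂.1 ▸ apply_mem_subtree h hne.symm)

theorem not_mem_forest (ht : IsTreeRootedAt m p r) : x ∉ forest p rk x k := by
  rintro ⟨c, hc, -, hx⟩
  exact ht.not_mem_subtree_of_mem_children hc hx

theorem mem_forest_root_iff (ht : IsTreeRootedAt m p r) : v ∈ forest p rk r 0 ↔ v ≠ r := by
  refine ⟨fun hv hvr => ht.not_mem_forest (hvr ▸ hv), fun hvr => ?_⟩
  simpa [hvr] using (mem_subtree_iff (rk := rk)).1 (ht.2 v)

theorem disjoint_subtree_forest_succ (ht : IsTreeRootedAt m p r) (ha : a ∈ children p x)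
    (hk : rk a = k) : Disjoint (subtree p a) (forest p rk x (k + 1)) := by
  rw [Set.disjoint_left]
  rintro v hva ⟨c, hc, hkc, hvc⟩
  exact Set.disjoint_left.1 (ht.disjoint_subtree ha hc (by rintro rfl; omega)) hva hvc

theorem forest_ssubset (ht : IsTreeRootedAt m p r) (ha : a ∈ children p x) (hk : rk a = k) :
    forest p rk a 0 ⊂ forest p rk x k :=
  (Set.ssubset_iff_of_subset (forest_subset_subtree.trans (subtree_subset_forest ha hk.ge))).2
    ⟨a, subtree_subset_forest ha hk.ge (mem_subtree_self a), ht.not_mem_forest⟩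

theorem forest_succ_ssubset (ht : IsTreeRootedAt m p r) (ha : a ∈ children p x) (hk : rk a = k) :
    forest p rk x (k + 1) ⊂ forest p rk x k :=
  (Set.ssubset_iff_of_subset forest_succ_subset).2
    ⟨a, subtree_subset_forest ha hk.ge (mem_subtree_self a),
      Set.disjoint_left.1 (ht.disjoint_subtree_forest_succ ha hk) (mem_subtree_self a)⟩

end IsTreeRootedAt

namespace IsPlaneOrder

variable {m : ℕ} {p : Fin m → Fin m} {rk : Fin m → ℕ} {x a c v : Fin m} {k : ℕ}

theorem injOn (ho : IsPlaneOrder m p rk) (x : Fin m) : Set.InjOn rk (children p x) :=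
  (ho.1 x).injOn

theorem exists_rank_eq (ho : IsPlaneOrder m p rk) (hc : c ∈ children p x) (hk : k ≤ rk c) :
    ∃ a ∈ children p x, rk a = k :=
  (ho.1 x).surjOn (lt_of_le_of_lt hk ((ho.1 x).mapsTo hc))

theorem mem_forest_iff (ho : IsPlaneOrder m p rk) (ha : a ∈ children p x) (hk : rk a = k) :
    v ∈ forest p rk x k ↔ v ∈ subtree p a ∨ v ∈ forest p rk x (k + 1) := by
  refine ⟨?_, ?_⟩
  · rintro ⟨c, hc, hkc, hv⟩
    rcases hkc.eq_or_lt with hkc | hkc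
    · exact Or.inl (ho.injOn x hc ha (hkc ▸ hk).symm ▸ hv)
    · exact Or.inr ⟨c, hc, hkc, hv⟩
  · rintro (hv | hv)
    exacts [subtree_subset_forest ha hk.ge hv, forest_succ_subset hv]

theorem forest_eq_empty (ho : IsPlaneOrder m p rk) (h : ¬∃ a ∈ children p x, rk a = k) :
    forest p rk x k = ∅ :=
  Set.eq_empty_of_forall_notMem fun _ ⟨_, hc, hkc, _⟩ => h (ho.exists_rank_eq hc hkc)

end IsPlaneOrder

namespace PlaneTree

section Entries
open BinaryTree

variable {α : Type*}

def labels : BinaryTree α → List α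
  | .nil => []
  | .node a l r => a :: (labels l ++ labels r)

/-- The rotation correspondence: in context `(x, k)` the root `a` of the tree is the `k`-th child
of `x`, the left subtree holds the children of `a` from rank `0` on, and the right subtree the
children of `x` from rank `k + 1` on. -/
def entries : BinaryTree α → α → ℕ → List (Σ _ : α, α × ℕ)
  | .nil, _, _ => []
  | .node a l r, x, k => ⟨a, x, k⟩ :: (entries l a 0 ++ entries r x (k + 1))

variable {a x q v w : α} {l r t : BinaryTree α} {k j : ℕ}

@[simp] theorem labels_nil : labels (nil : BinaryTree α) = [] := rfl

@[simp] theorem labels_node : labels (node a l r) = a :: (labels l ++ labels r) := rfl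

theorem mem_labels_node : v ∈ labels (node a l r) ↔ v = a ∨ v ∈ labels l ∨ v ∈ labels r := by
  simp

@[simp] theorem entries_nil : entries (nil : BinaryTree α) x k = [] := rfl

@[simp] theorem mem_entries_node :
    ⟨v, q, j⟩ ∈ entries (node a l r) x k ↔
      (v = a ∧ q = x ∧ j = k) ∨ ⟨v, q, j⟩ ∈ entries l a 0 ∨ ⟨v, q, j⟩ ∈ entries r x (k + 1) := by
  simp [entries]

theorem keys_entries (t : BinaryTree α) (x : α) (k : ℕ) : (entries t x k).keys = labels t := by
  induction t generalizing x k <;> simp [entries, List.keys_cons, List.keys_append, *]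

theorem length_labels (t : BinaryTree α) : (labels t).length = t.numNodes := by
  induction t <;> simp [*]

theorem parent_mem_of_mem_entries (h : ⟨v, q, j⟩ ∈ entries t x k) : q = x ∨ q ∈ labels t := by
  induction t generalizing v x k with
  | nil => simp at h
  | node a l r ihl ihr =>
    rcases mem_entries_node.1 h with ⟨-, rfl, -⟩ | h | h
    · exact Or.inl rfl
    · rcases ihl h with rfl | h <;> simp [*]
    · rcases ihr h with rfl | h <;> simp [*]

theorem nodup_labels_node :
    (labels (node a l r)).Nodup ↔ a ∉ labels l ∧ a ∉ labels r ∧ (labels l).Nodup ∧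
      (labels r).Nodup ∧ ∀ v ∈ labels l, v ∉ labels r := by
  simp only [labels_node, List.nodup_cons, List.nodup_append, List.mem_append, not_or]
  grind

theorem ne_of_mem_entries (hnd : (labels t).Nodup) (hx : x ∉ labels t)
    (h : ⟨v, q, j⟩ ∈ entries t x k) : v ≠ q := by
  induction t generalizing v x k with
  | nil => simp at h
  | node a l r ihl ihr =>
    obtain ⟨hal, -, hl, hr, -⟩ := nodup_labels_node.1 hnd
    simp only [labels_node, List.mem_cons, List.mem_append, not_or] at hx
    rcases mem_entries_node.1 h with ⟨rfl, rfl, -⟩ | h | h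
    · exact fun h => hx.1 h.symm
    · exact ihl hl hal h
    · exact ihr hr hx.2.2 h

theorem le_of_mem_entries (hx : x ∉ labels t) (h : ⟨v, x, j⟩ ∈ entries t x k) : k ≤ j := by
  induction t generalizing v k with
  | nil => simp at h
  | node a l r ihl ihr =>
    simp only [labels_node, List.mem_cons, List.mem_append, not_or] at hx
    rcases mem_entries_node.1 h with ⟨-, -, rfl⟩ | h | h
    · exact le_rfl
    · rcases parent_mem_of_mem_entries h with h | h
      exacts [absurd h hx.1, absurd h hx.2.1]
    · exact (ihr hx.2.2 h).trans' (Nat.le_succ k)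

theorem eq_of_mem_entries (hnd : (labels t).Nodup) (hx : x ∉ labels t)
    (hv : ⟨v, q, j⟩ ∈ entries t x k) (hw : ⟨w, q, j⟩ ∈ entries t x k) : v = w := by
  induction t generalizing v w x k with
  | nil => simp at hv
  | node a l r ihl ihr =>
    obtain ⟨hal, har, hl, hr, hlr⟩ := nodup_labels_node.1 hnd
    simp only [labels_node, List.mem_cons, List.mem_append, not_or] at hx
    have not_top_left : ∀ {u i}, ⟨u, x, i⟩ ∉ entries l a 0 := fun h => by
      rcases parent_mem_of_mem_entries h with h | h
      exacts [hx.1 h, hx.2.1 h]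
    have not_top_right : ∀ {u}, ⟨u, x, k⟩ ∉ entries r x (k + 1) := fun h => by
      have := le_of_mem_entries hx.2.2 h
      omega
    have not_left_right : ∀ {u u'}, ⟨u, q, j⟩ ∈ entries l a 0 → ⟨u', q, j⟩ ∉ entries r x (k + 1) :=
      fun h h' => by
        rcases parent_mem_of_mem_entries h with rfl | h <;>
          rcases parent_mem_of_mem_entries h' with rfl | h'
        exacts [hx.1 rfl, har h', hx.2.1 h, hlr _ h h']
    rw [mem_entries_node] at hv hw
    rcases hv with ⟨rfl, rfl, rfl⟩ | hv | hv <;> rcases hw with ⟨rfl, hq, hj⟩ | hw | hw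
    · rfl
    · exact (not_top_left hw).elim
    · exact (not_top_right hw).elim
    · exact (not_top_left (by rwa [hq] at hv)).elim
    · exact ihl hl hal hv hw
    · exact (not_left_right hv hw).elim
    · exact (not_top_right (by rwa [hq, hj] at hv)).elim
    · exact (not_left_right hw hv).elim
    · exact ihr hr hx.2.2 hv hw

theorem exists_mem_entries_of_succ (h : ⟨v, q, j + 1⟩ ∈ entries t x k) :
    (q = x ∧ j + 1 = k) ∨ ∃ w, ⟨w, q, j⟩ ∈ entries t x k := by
  induction t generalizing v x k with
  | nil => simp at h
  | node a l r ihl ihr =>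
    rcases mem_entries_node.1 h with ⟨-, rfl, rfl⟩ | h | h
    · exact Or.inl ⟨rfl, rfl⟩
    · rcases ihl h with ⟨-, h⟩ | ⟨w, hw⟩
      · omega
      · exact Or.inr ⟨w, mem_entries_node.2 (Or.inr (Or.inl hw))⟩
    · rcases ihr h with ⟨rfl, hj⟩ | ⟨w, hw⟩
      · exact Or.inr ⟨a, mem_entries_node.2 (Or.inl ⟨rfl, rfl, by omega⟩)⟩
      · exact Or.inr ⟨w, mem_entries_node.2 (Or.inr (Or.inr hw))⟩

end Entries

section Encodes

variable {V : Type*} {p : V → V} {rk : V → ℕ} {t l r : BinaryTree V} {a x v : V} {k : ℕ}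

def Encodes (p : V → V) (rk : V → ℕ) (t : BinaryTree V) (x : V) (k : ℕ) : Prop :=
  ∀ v q j, ⟨v, q, j⟩ ∈ entries t x k → v ∈ children p q ∧ rk v = j

theorem encodes_nil : Encodes p rk .nil x k := by
  simp [Encodes]

theorem encodes_node :
    Encodes p rk (.node a l r) x k ↔
      (a ∈ children p x ∧ rk a = k) ∧ Encodes p rk l a 0 ∧ Encodes p rk r x (k + 1) := by
  simp only [Encodes, mem_entries_node]
  refine ⟨fun h => ⟨h a x k (Or.inl ⟨rfl, rfl, rfl⟩), fun v q j hv => h v q j (Or.inr (Or.inl hv)),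
    fun v q j hv => h v q j (Or.inr (Or.inr hv))⟩, ?_⟩
  rintro ⟨ha, hl, hr⟩ v q j (⟨rfl, rfl, rfl⟩ | hv | hv)
  exacts [ha, hl v q j hv, hr v q j hv]

theorem mem_forest_of_mem_labels (hE : Encodes p rk t x k) (hv : v ∈ labels t) :
    v ∈ forest p rk x k := by
  induction t generalizing x k with
  | nil => simp at hv
  | node a l r ihl ihr =>
    obtain ⟨⟨ha, hk⟩, hl, hr⟩ := encodes_node.1 hE
    simp only [labels_node, List.mem_cons, List.mem_append] at hv
    rcases hv with rfl | hv | hv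
    · exact subtree_subset_forest ha hk.ge (mem_subtree_self v)
    · exact subtree_subset_forest ha hk.ge (forest_subset_subtree (ihl hl hv))
    · exact forest_succ_subset (ihr hr hv)

end Encodes

variable {m : ℕ} {p : Fin m → Fin m} {rk : Fin m → ℕ} {t : BinaryTree (Fin m)} {r x v : Fin m}
  {k : ℕ}

theorem nodup_labels_of_encodes (ht : IsTreeRootedAt m p r) (hE : Encodes p rk t x k) :
    (labels t).Nodup := by
  induction t generalizing x k with
  | nil => simp
  | node a l r ihl ihr =>
    obtain ⟨⟨ha, hk⟩, hl, hr⟩ := encodes_node.1 hE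
    have hdisj := Set.disjoint_left.1 (ht.disjoint_subtree_forest_succ ha hk)
    refine nodup_labels_node.2 ⟨fun h => ht.not_mem_forest (mem_forest_of_mem_labels hl h),
      fun h => hdisj (mem_subtree_self a) (mem_forest_of_mem_labels hr h), ihl hl, ihr hr,
      fun v hvl hvr => hdisj ?_ (mem_forest_of_mem_labels hr hvr)⟩
    exact forest_subset_subtree (mem_forest_of_mem_labels hl hvl)

open Classical in
/-- Inverse of the rotation correspondence: the binary tree encoding `forest p rk x k`. -/
noncomputable def build (rk : Fin m → ℕ) (ht : IsTreeRootedAt m p r) (x : Fin m) (k : ℕ) :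
    BinaryTree (Fin m) :=
  if h : ∃ a ∈ children p x, rk a = k then
    .node h.choose (build rk ht h.choose 0) (build rk ht x (k + 1))
  else .nil
termination_by (forest p rk x k).ncard
decreasing_by
  · exact Set.ncard_lt_ncard (ht.forest_ssubset h.choose_spec.1 h.choose_spec.2)
  · exact Set.ncard_lt_ncard (ht.forest_succ_ssubset h.choose_spec.1 h.choose_spec.2)

section Build

variable (ht : IsTreeRootedAt m p r)
include ht

theorem encodes_build : Encodes p rk (build rk ht x k) x k := by
  fun_induction build rk ht x k with
  | case1 x k h ihl ihr => exact encodes_node.2 ⟨h.choose_spec, ihl, ihr⟩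
  | case2 x k h => exact encodes_nil

theorem mem_labels_build (ho : IsPlaneOrder m p rk) :
    v ∈ labels (build rk ht x k) ↔ v ∈ forest p rk x k := by
  fun_induction build rk ht x k with
  | case1 x k h ihl ihr =>
    rw [ho.mem_forest_iff h.choose_spec.1 h.choose_spec.2, mem_subtree_iff (rk := rk)]
    simp only [labels_node, List.mem_cons, List.mem_append, ihl, ihr, or_assoc]
  | case2 x k h => simp [ho.forest_eq_empty h]

theorem build_eq_of_encodes (ho : IsPlaneOrder m p rk) (hE : Encodes p rk t x k)
    (hlab : ∀ v, v ∈ labels t ↔ v ∈ forest p rk x k) : build rk ht x k = t := by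
  induction t generalizing x k with
  | nil =>
    rw [build, dif_neg]
    rintro ⟨a, ha, hk⟩
    simpa using (hlab a).2 (subtree_subset_forest ha hk.ge (mem_subtree_self a))
  | node a l r ihl ihr =>
    obtain ⟨⟨ha, hk⟩, hl, hr⟩ := encodes_node.1 hE
    have h : ∃ a ∈ children p x, rk a = k := ⟨a, ha, hk⟩
    have hchoose : h.choose = a := ho.injOn x h.choose_spec.1 ha (h.choose_spec.2.trans hk.symm)
    have hdisj := Set.disjoint_left.1 (ht.disjoint_subtree_forest_succ ha hk)
    have hsub : subtree p a ⊆ forest p rk x k := subtree_subset_forest ha hk.ge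
    rw [build, dif_pos h, hchoose, ihl hl, ihr hr]
    · refine fun v => ⟨mem_forest_of_mem_labels hr, fun hv => ?_⟩
      rcases mem_labels_node.1 ((hlab v).2 (forest_succ_subset hv)) with rfl | hv' | hv'
      · exact (hdisj (mem_subtree_self v) hv).elim
      · exact (hdisj (forest_subset_subtree (mem_forest_of_mem_labels hl hv')) hv).elim
      · exact hv'
    · refine fun v => ⟨mem_forest_of_mem_labels hl, fun hv => ?_⟩
      rcases mem_labels_node.1 ((hlab v).2 (hsub (forest_subset_subtree hv))) with rfl | hv' | hv'
      · exact (ht.not_mem_forest hv).elim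
      · exact hv'
      · exact (hdisj (forest_subset_subtree hv) (mem_forest_of_mem_labels hr hv')).elim

end Build

section Code

variable {α : Type*} [DecidableEq α] {t : BinaryTree α} {r v q : α} {j : ℕ}

def parentRank (t : BinaryTree α) (r v : α) : α × ℕ :=
  ((entries t r 0).dlookup v).getD (v, 0)

def code (t : BinaryTree α) (r : α) : (α → α) × (α → ℕ) :=
  (fun v => (parentRank t r v).1, fun v => (parentRank t r v).2)

theorem parentRank_of_mem_entries (hnd : (labels t).Nodup) (h : ⟨v, q, j⟩ ∈ entries t r 0) :
    parentRank t r v = (q, j) := by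
  have hkeys : (entries t r 0).NodupKeys := by rwa [List.NodupKeys, keys_entries]
  rw [parentRank, (List.mem_dlookup_iff hkeys).2 h, Option.getD_some]

theorem parentRank_of_not_mem (h : v ∉ labels t) : parentRank t r v = (v, 0) := by
  rw [parentRank, List.dlookup_eq_none.2 (by rwa [keys_entries]), Option.getD_none]

theorem mem_entries_parentRank (h : v ∈ labels t) : ⟨v, parentRank t r v⟩ ∈ entries t r 0 := by
  obtain ⟨b, hb⟩ := Option.isSome_iff_exists.1
    (List.dlookup_isSome.2 (by rwa [keys_entries] : v ∈ (entries t r 0).keys))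
  rw [parentRank, hb, Option.getD_some]
  exact List.of_mem_dlookup hb

theorem encodes_code (hnd : (labels t).Nodup) (hr : r ∉ labels t) :
    Encodes (code t r).1 (code t r).2 t r 0 := by
  intro v q j h
  have hv := parentRank_of_mem_entries hnd h
  exact ⟨⟨congrArg Prod.fst hv, ne_of_mem_entries hnd hr h⟩, congrArg Prod.snd hv⟩

theorem mem_children_code_iff (hnd : (labels t).Nodup) (hr : r ∉ labels t) :
    v ∈ children (code t r).1 q ↔ ⟨v, q, (code t r).2 v⟩ ∈ entries t r 0 := by
  refine ⟨fun ⟨hvq, hne⟩ => ?_, fun h => (encodes_code hnd hr v q _ h).1⟩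
  have hv : v ∈ labels t := by
    by_contra hv
    exact hne ((congrArg Prod.fst (parentRank_of_not_mem hv)).symm.trans hvq)
  rw [← hvq]
  exact mem_entries_parentRank hv

end Code

theorem isTreeRootedAt_code (hnd : (labels t).Nodup) (hlab : ∀ v, v ∈ labels t ↔ v ≠ r) :
    IsTreeRootedAt m (code t r).1 r := by
  have hr : r ∉ labels t := fun h => (hlab r).1 h rfl
  refine ⟨fun v => ⟨fun hv => ?_, ?_⟩, fun v => ?_⟩
  · by_contra hvr
    exact (encodes_code hnd hr v _ _ (mem_entries_parentRank ((hlab v).2 hvr))).1.2 hv.symm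
  · rintro rfl
    simp [code, parentRank_of_not_mem hr]
  · by_cases hvr : v = r
    · exact ⟨0, hvr⟩
    · exact forest_subset_subtree (mem_forest_of_mem_labels (encodes_code hnd hr) ((hlab v).2 hvr))

theorem isPlaneOrder_code (hnd : (labels t).Nodup) (hlab : ∀ v, v ∈ labels t ↔ v ≠ r) :
    IsPlaneOrder m (code t r).1 (code t r).2 := by
  have hr : r ∉ labels t := fun h => (hlab r).1 h rfl
  refine ⟨fun x => Set.InjOn.bijOn_Iio_ncard ?_ (Set.toFinite _) ?_, fun v hv => ?_⟩
  · intro v hv w hw hvw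
    have hw' := (mem_children_code_iff hnd hr).1 hw
    rw [← hvw] at hw'
    exact eq_of_mem_entries hnd hr ((mem_children_code_iff hnd hr).1 hv) hw'
  · intro v hv j hj
    have hv' := (mem_children_code_iff hnd hr).1 hv
    rw [hj] at hv'
    rcases exists_mem_entries_of_succ hv' with ⟨-, h⟩ | ⟨w, hw⟩
    · omega
    · exact ⟨w, (encodes_code hnd hr w x j hw).1, (encodes_code hnd hr w x j hw).2⟩
  · have hvr : v = r := ((isTreeRootedAt_code hnd hlab).1 v).1 hv
    simp [code, hvr, parentRank_of_not_mem hr]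

theorem parentRank_build (ht : IsTreeRootedAt m p r) (ho : IsPlaneOrder m p rk) (v : Fin m) :
    parentRank (build rk ht r 0) r v = (p v, rk v) := by
  by_cases hvr : v = r
  · subst hvr
    have hp : p v = v := (ht.1 v).2 rfl
    rw [parentRank_of_not_mem (by simp [mem_labels_build ht ho, ht.mem_forest_root_iff]), hp,
      ho.2 v hp]
  · have hv : v ∈ labels (build rk ht r 0) :=
      (mem_labels_build ht ho).2 (ht.mem_forest_root_iff.2 hvr)
    have h := encodes_build ht v _ _ (mem_entries_parentRank (r := r) hv)
    exact Prod.ext h.1.1.symm h.2.symm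

noncomputable def rotationEquiv (r : Fin m) :
    {pr : (Fin m → Fin m) × (Fin m → ℕ) // IsTreeRootedAt m pr.1 r ∧ IsPlaneOrder m pr.1 pr.2} ≃
      {t : BinaryTree (Fin m) // (labels t).Nodup ∧ ∀ v, v ∈ labels t ↔ v ≠ r} where
  toFun c := ⟨build c.1.2 c.2.1 r 0, nodup_labels_of_encodes c.2.1 (encodes_build c.2.1),
    fun _ => (mem_labels_build c.2.1 c.2.2).trans c.2.1.mem_forest_root_iff⟩
  invFun t := ⟨code t.1 r, isTreeRootedAt_code t.2.1 t.2.2, isPlaneOrder_code t.2.1 t.2.2⟩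
  left_inv c := Subtype.ext <| Prod.ext (funext fun v => congrArg Prod.fst
    (parentRank_build c.2.1 c.2.2 v)) (funext fun v => congrArg Prod.snd
    (parentRank_build c.2.1 c.2.2 v))
  right_inv t := Subtype.ext <| build_eq_of_encodes _ (isPlaneOrder_code t.2.1 t.2.2)
    (encodes_code t.2.1 fun h => (t.2.2 r).1 h rfl)
    fun v => (t.2.2 v).trans (isTreeRootedAt_code t.2.1 t.2.2).mem_forest_root_iff.symm

noncomputable def sigmaRootEquiv (m : ℕ) :
    {pr : (Fin m → Fin m) × (Fin m → ℕ) //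
        (∃ r, IsTreeRootedAt m pr.1 r) ∧ IsPlaneOrder m pr.1 pr.2} ≃
      Σ r : Fin m, {pr : (Fin m → Fin m) × (Fin m → ℕ) //
        IsTreeRootedAt m pr.1 r ∧ IsPlaneOrder m pr.1 pr.2} where
  toFun c := ⟨c.2.1.choose, c.1, c.2.1.choose_spec, c.2.2⟩
  invFun c := ⟨c.2.1, ⟨c.1, c.2.2.1⟩, c.2.2.2⟩
  left_inv _ := rfl
  right_inv c := Sigma.subtype_ext (c.2.2.1.root_unique (Exists.choose_spec ⟨c.1, c.2.2.1⟩)) rfl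

section Counting

variable {α : Type*}

def shape (t : BinaryTree α) : BinaryTree Unit := t.map fun _ => ()

@[simp] theorem shape_nil : shape (.nil : BinaryTree α) = .nil := rfl

@[simp] theorem shape_node (a : α) (l r : BinaryTree α) :
    shape (.node a l r) = .node () (shape l) (shape r) := rfl

theorem numNodes_shape (t : BinaryTree α) : (shape t).numNodes = t.numNodes := by
  induction t <;> simp_all

theorem eq_of_shape_eq_of_labels_eq {t t' : BinaryTree α} (hs : shape t = shape t')
    (hl : labels t = labels t') : t = t' := by
  induction t generalizing t' with
  | nil => cases t' <;> simp_all
  | node a l r ihl ihr =>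
    cases t' with
    | nil => simp at hs
    | node a' l' r' =>
      simp only [shape_node, BinaryTree.node.injEq, true_and] at hs
      have hlen : (labels l).length = (labels l').length := by
        rw [length_labels, length_labels, ← numNodes_shape l, ← numNodes_shape l', hs.1]
      simp only [labels_node, List.cons.injEq] at hl
      obtain ⟨hl₁, hl₂⟩ := List.append_inj hl.2 hlen
      rw [hl.1, ihl hs.1 hl₁, ihr hs.2 hl₂]

theorem exists_shape_eq_labels_eq (s : BinaryTree Unit) (l : List α) (h : s.numNodes = l.length) :
    ∃ t, shape t = s ∧ labels t = l := by
  induction s generalizing l with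
  | nil => exact ⟨.nil, rfl, (List.length_eq_zero_iff.1 (by simpa using h.symm)).symm⟩
  | node u sl sr ihl ihr =>
    obtain ⟨a, l', rfl⟩ := List.exists_cons_of_length_eq_add_one (by simpa using h.symm)
    obtain ⟨tl, hsl, hll⟩ := ihl (l'.take sl.numNodes) (by simp at h ⊢; omega)
    obtain ⟨tr, hsr, hlr⟩ := ihr (l'.drop sl.numNodes) (by simp at h ⊢; omega)
    exact ⟨.node a tl tr, by simp [← hsl, ← hsr], by simp [hll, hlr]⟩

theorem card_numNodes_eq (n : ℕ) :
    Nat.card {s : BinaryTree Unit // s.numNodes = n} = catalan n := by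
  rw [← BinaryTree.treesOfNumNodesEq_card_eq_catalan, ← Nat.card_eq_finsetCard]
  exact Nat.card_congr (Equiv.subtypeEquivRight fun _ => BinaryTree.mem_treesOfNumNodesEq.symm)

variable [DecidableEq α]

theorem length_eq_card {s : Finset α} {l : List α} (hl : l.Nodup ∧ ∀ v, v ∈ l ↔ v ∈ s) :
    l.length = s.card := by
  rw [← List.toFinset_card_of_nodup hl.1]
  congr 1
  ext v
  simp [hl.2]

theorem card_nodup_lists (s : Finset α) :
    Nat.card {l : List α // l.Nodup ∧ ∀ v, v ∈ l ↔ v ∈ s} = s.card.factorial := by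
  have e : {l : List α // l.Nodup ∧ ∀ v, v ∈ l ↔ v ∈ s} ≃ {l // l ∈ s.toList.permutations} :=
    Equiv.subtypeEquivRight fun l => by
      rw [List.mem_permutations]
      refine ⟨fun h => (List.perm_ext_iff_of_nodup h.1 s.nodup_toList).2 (by simpa using h.2),
        fun h => ⟨h.nodup_iff.2 s.nodup_toList, fun v => by simpa using h.mem_iff⟩⟩
  rw [Nat.card_congr (e.trans (List.Nodup.getEquiv _
    (List.nodup_permutations _ s.nodup_toList)).symm), Nat.card_eq_fintype_card,
    Fintype.card_fin, List.length_permutations, Finset.length_toList]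

theorem card_labeledBinaryTrees (s : Finset α) :
    Nat.card {t : BinaryTree α // (labels t).Nodup ∧ ∀ v, v ∈ labels t ↔ v ∈ s} =
      catalan s.card * s.card.factorial := by
  let f : {t : BinaryTree α // (labels t).Nodup ∧ ∀ v, v ∈ labels t ↔ v ∈ s} →
      {u : BinaryTree Unit // u.numNodes = s.card} ×
        {l : List α // l.Nodup ∧ ∀ v, v ∈ l ↔ v ∈ s} := fun t =>
    (⟨shape t.1, by rw [numNodes_shape, ← length_labels, length_eq_card t.2]⟩, ⟨labels t.1, t.2⟩)
  have hf : Function.Bijective f := by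
    refine ⟨fun t t' h => Subtype.ext (eq_of_shape_eq_of_labels_eq ?_ ?_), fun ⟨u, l⟩ => ?_⟩
    · exact congrArg (fun x => x.1.1) h
    · exact congrArg (fun x => x.2.1) h
    · obtain ⟨t, hu, hl⟩ := exists_shape_eq_labels_eq u.1 l.1 (by rw [u.2, length_eq_card l.2])
      exact ⟨⟨t, hl ▸ l.2⟩, Prod.ext (Subtype.ext hu) (Subtype.ext hl)⟩
  rw [Nat.card_congr (Equiv.ofBijective f hf), Nat.card_prod, card_numNodes_eq, card_nodup_lists]

end Counting

theorem card_planeCodes (n : ℕ) :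
    Nat.card {pr : (Fin (n + 1) → Fin (n + 1)) × (Fin (n + 1) → ℕ) //
        (∃ r, IsTreeRootedAt (n + 1) pr.1 r) ∧ IsPlaneOrder (n + 1) pr.1 pr.2} =
      (n + 1) * (catalan n * n.factorial) := by
  have hroot (r : Fin (n + 1)) : Nat.card {t : BinaryTree (Fin (n + 1)) //
      (labels t).Nodup ∧ ∀ v, v ∈ labels t ↔ v ≠ r} = catalan n * n.factorial := by
    simpa [Finset.card_compl] using card_labeledBinaryTrees ({r}ᶜ : Finset (Fin (n + 1)))
  have hcatalan : catalan n ≠ 0 := right_ne_zero_of_mul (by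
    rw [succ_mul_catalan_eq_centralBinom]
    exact Nat.centralBinom_ne_zero n)
  have (r : Fin (n + 1)) : Finite {t : BinaryTree (Fin (n + 1)) //
      (labels t).Nodup ∧ ∀ v, v ∈ labels t ↔ v ≠ r} :=
    Nat.finite_of_card_ne_zero (by rw [hroot]; exact mul_ne_zero hcatalan n.factorial_ne_zero)
  rw [Nat.card_congr ((sigmaRootEquiv _).trans (Equiv.sigmaCongrRight rotationEquiv)),
    Nat.card_sigma]
  simp [hroot]

end PlaneTree

theorem succ_mul_catalan_mul_factorial_mul_factorial (n : ℕ) :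
    (n + 1) * (catalan n * n.factorial) * n.factorial = (2 * n).factorial := by
  rw [← mul_assoc, succ_mul_catalan_eq_centralBinom, Nat.centralBinom_eq_two_mul_choose, two_mul,
    Nat.add_choose_mul_factorial_mul_factorial]

theorem card_labeled_plane_trees_general (n : ℕ) :
    (Nat.card {pr : (Fin (n + 1) → Fin (n + 1)) × (Fin (n + 1) → ℕ) //
        (∃ r, IsTreeRootedAt (n + 1) pr.1 r) ∧ IsPlaneOrder (n + 1) pr.1 pr.2} : ℚ) =
      (2 * n).factorial / n.factorial := by
  rw [card_planeCodes, eq_div_iff (by positivity)]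
  exact_mod_cast succ_mul_catalan_mul_factorial_mul_factorial n

theorem card_labeled_plane_trees (n : ℕ) (hn : 1 ≤ n) :
    (Nat.card {pr : (Fin (n + 1) → Fin (n + 1)) × (Fin (n + 1) → ℕ) //
        (∃ r, IsTreeRootedAt (n + 1) pr.1 r) ∧ IsPlaneOrder (n + 1) pr.1 pr.2} : ℚ) =
      (2 * n).factorial / n.factorial :=
  card_labeled_plane_trees_general n
end

section
/- For any nonnegative integer sequence (d₁, …, dₙ) with d₁ + ⋯ + dₙ = n−1, the number of labeled plane trees on {1,…,n} in which vertex i has exactly dᵢ children for every i equals (n−1)!. -/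
open Finset Function Nat

lemma prod_factorial_eq_mul_prod_factorial_update {ι : Type*} [Fintype ι] [DecidableEq ι]
    {f : ι → ℕ} {i : ι} (hi : f i ≠ 0) :
    ∏ x, (f x)! = f i * ∏ x, (update f i (f i - 1) x)! := by
  rw [← mul_prod_erase univ _ (mem_univ i),
    ← mul_prod_erase univ (fun x => (update f i (f i - 1) x)!) (mem_univ i), update_self,
    ← mul_assoc, mul_factorial_pred hi]
  congr 1
  exact prod_congr rfl fun x hx => by rw [update_of_ne (ne_of_mem_erase hx)]

lemma sum_update_pred_add_one {ι : Type*} [Fintype ι] [DecidableEq ι]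
    {f : ι → ℕ} {i : ι} (hi : f i ≠ 0) :
    ∑ x, update f i (f i - 1) x + 1 = ∑ x, f x := by
  rw [sum_update_of_mem (mem_univ i), sdiff_singleton_eq_erase,
    ← add_sum_erase univ f (mem_univ i)]
  omega

lemma card_equiv_fin_card {γ : Type*} [Finite γ] :
    Nat.card (γ ≃ Fin (Nat.card γ)) = (Nat.card γ)! := by
  rw [Nat.card_congr (Equiv.equivCongr (Equiv.refl γ) (Finite.equivFin γ).symm), Nat.card_perm]

namespace ParentMap

variable {α β : Type*}

/-- `IsTreeRootedAt` for an arbitrary vertex type, so that a leaf can be split off as `none` of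
an `Option` type. -/
def IsTree (p : α → α) (r : α) : Prop :=
  (∀ v, p v = v ↔ v = r) ∧ ∀ v, ∃ l, p^[l] v = r

def children (p : α → α) (x : α) : Set α := {v | p v = x ∧ v ≠ x}

def treesWithChildCounts (d : α → ℕ) : Set (α → α) :=
  {p | (∃ r, IsTree p r) ∧ ∀ x, (children p x).ncard = d x}

lemma eq_of_apply_eq_of_ncard_children_eq_zero [Finite α] {p : α → α} {x w : α}
    (h : (children p x).ncard = 0) (hw : p w = x) : w = x := by
  by_contra hne
  have hmem : w ∈ children p x := ⟨hw, hne⟩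
  rw [Set.ncard_eq_zero (Set.toFinite _)] at h
  simp [h] at hmem

section Conj

variable (e : α ≃ β) {p : α → α}

lemma isTree_conj_iff {r : α} : IsTree (e.conj p) (e r) ↔ IsTree p r := by
  have hiter (l : ℕ) (v : α) : (e.conj p)^[l] (e v) = e (p^[l] v) :=
    (Semiconj.iterate_right (f := e) (fun v => by simp) l v).symm
  simp only [IsTree, ← e.forall_congr_right (q := fun w => _ ↔ _),
    ← e.forall_congr_right (q := fun w => ∃ l, _ = _), hiter, Equiv.conj_apply,
    e.symm_apply_apply, e.apply_eq_iff_eq]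

lemma children_conj (x : α) : children (e.conj p) (e x) = e '' children p x := by
  ext w
  simp [children, e.image_eq_preimage_symm, e.symm_apply_eq]

lemma conj_mem_treesWithChildCounts_iff {d : β → ℕ} :
    e.conj p ∈ treesWithChildCounts d ↔ p ∈ treesWithChildCounts (d ∘ e) := by
  simp only [treesWithChildCounts, Set.mem_ofPred_eq,
    ← e.exists_congr_right (q := fun r => IsTree _ r),
    ← e.forall_congr_right (q := fun x => Set.ncard _ = _), isTree_conj_iff, children_conj,
    Set.ncard_image_of_injective _ e.injective, comp_apply]

lemma card_treesWithChildCounts_comp (d : β → ℕ) :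
    Nat.card (treesWithChildCounts (d ∘ e)) = Nat.card (treesWithChildCounts d) :=
  Nat.card_congr (e.conj.subtypeEquiv fun _ => (conj_mem_treesWithChildCounts_iff e).symm)

end Conj

section Option

def attachLeaf (i : β) (q : β → β) : Option β → Option β
  | none => some i
  | some b => some (q b)

def detachLeaf (p : Option β → Option β) (b : β) : β := (p (some b)).getD b

variable {i : β} {q : β → β}

lemma isTree_attachLeaf_some_iff {r : β} : IsTree (attachLeaf i q) (some r) ↔ IsTree q r := by
  have hiter (l : ℕ) (b : β) : (attachLeaf i q)^[l] (some b) = some (q^[l] b) :=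
    (Semiconj.iterate_right (f := some) (fun _ => rfl) l b).symm
  simp only [IsTree, Option.forall, attachLeaf, hiter, Option.some_inj, reduceCtorEq,
    true_and]
  constructor
  · rintro ⟨hfix, -, hreach⟩
    exact ⟨hfix, hreach⟩
  · rintro ⟨hfix, hreach⟩
    obtain ⟨l, hl⟩ := hreach i
    exact ⟨hfix, ⟨l + 1, by rw [iterate_succ_apply, attachLeaf, hiter, hl]⟩, hreach⟩

lemma exists_isTree_attachLeaf_iff : (∃ r, IsTree (attachLeaf i q) r) ↔ ∃ r, IsTree q r := by
  simp only [Option.exists, isTree_attachLeaf_some_iff, or_iff_right_iff_imp]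
  rintro ⟨hfix, -⟩
  simpa [attachLeaf] using (hfix none).2 rfl

lemma children_attachLeaf_none : children (attachLeaf i q) none = ∅ := by
  ext (_ | b) <;> simp [children, attachLeaf]

lemma ncard_children_attachLeaf_some [Finite β] [DecidableEq β] (x : β) :
    (children (attachLeaf i q) (some x)).ncard =
      (children q x).ncard + if x = i then 1 else 0 := by
  split_ifs with hx
  · subst hx
    have hchildren : children (attachLeaf x q) (some x) = insert none (some '' children q x) := by
      ext (_ | b) <;> simp [children, attachLeaf]
    rw [hchildren, Set.ncard_insert_of_notMem (by simp),
      Set.ncard_image_of_injective _ (Option.some_injective _)]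
  · have hchildren : children (attachLeaf i q) (some x) = some '' children q x := by
      ext (_ | b) <;> simp [children, attachLeaf, Ne.symm hx]
    rw [hchildren, Set.ncard_image_of_injective _ (Option.some_injective _), add_zero]

lemma attachLeaf_mem_treesWithChildCounts_iff [Finite β] [DecidableEq β] {d : Option β → ℕ}
    (hd0 : d none = 0) (hi : d (some i) ≠ 0) :
    attachLeaf i q ∈ treesWithChildCounts d ↔
      q ∈ treesWithChildCounts (update (d ∘ some) i (d (some i) - 1)) := by
  simp only [treesWithChildCounts, Set.mem_ofPred_eq, exists_isTree_attachLeaf_iff, Option.forall,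
    children_attachLeaf_none, Set.ncard_empty, hd0, ncard_children_attachLeaf_some, true_and]
  refine and_congr_right fun _ => forall_congr' fun x => ?_
  rcases eq_or_ne x i with rfl | hx
  · simp only [if_true, update_self]
    omega
  · simp [hx]

variable {p : Option β → Option β}

lemma apply_some_eq_some_detachLeaf (hp : ∀ b, p (some b) ≠ none) (b : β) :
    p (some b) = some (detachLeaf p b) := by
  obtain ⟨c, hc⟩ := Option.ne_none_iff_exists'.1 (hp b)
  simp [detachLeaf, hc]

lemma attachLeaf_detachLeaf (hnone : p none = some i) (hp : ∀ b, p (some b) ≠ none) :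
    attachLeaf i (detachLeaf p) = p := by
  funext x
  cases x with
  | none => exact hnone.symm
  | some b => exact (apply_some_eq_some_detachLeaf hp b).symm

variable [Finite β] {d : Option β → ℕ}

lemma apply_some_ne_none (hp : p ∈ treesWithChildCounts d) (hd0 : d none = 0) (b : β) :
    p (some b) ≠ none := fun h =>
  Option.some_ne_none b (eq_of_apply_eq_of_ncard_children_eq_zero ((hp.2 none).trans hd0) h)

lemma apply_none_ne_none [Nonempty β] (hp : p ∈ treesWithChildCounts d) (hd0 : d none = 0) :
    p none ≠ none := by
  intro h
  obtain ⟨r, hfix, hreach⟩ := hp.1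
  obtain rfl : none = r := (hfix none).1 h
  obtain ⟨l, hl⟩ := hreach (some (Classical.arbitrary β))
  have hsemi : Semiconj some (detachLeaf p) p := fun b =>
    (apply_some_eq_some_detachLeaf (apply_some_ne_none hp hd0) b).symm
  rw [← hsemi.iterate_right l] at hl
  exact Option.some_ne_none _ hl

def leafFiberEquiv [DecidableEq β] (hd0 : d none = 0) (hi : d (some i) ≠ 0) :
    {p : treesWithChildCounts d // p.1 none = some i} ≃
      treesWithChildCounts (update (d ∘ some) i (d (some i) - 1)) where
  toFun p := ⟨detachLeaf p.1.1, (attachLeaf_mem_treesWithChildCounts_iff hd0 hi).1 <| by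
    rw [attachLeaf_detachLeaf p.2 (apply_some_ne_none p.1.2 hd0)]; exact p.1.2⟩
  invFun q :=
    ⟨⟨attachLeaf i q.1, (attachLeaf_mem_treesWithChildCounts_iff hd0 hi).2 q.2⟩, rfl⟩
  left_inv p := Subtype.ext <| Subtype.ext <|
    attachLeaf_detachLeaf p.2 (apply_some_ne_none p.1.2 hd0)
  right_inv _ := rfl

lemma isEmpty_leafFiber (hi : d (some i) = 0) :
    IsEmpty {p : treesWithChildCounts d // p.1 none = some i} :=
  ⟨fun p => Option.some_ne_none i
    (eq_of_apply_eq_of_ncard_children_eq_zero ((p.1.2.2 (some i)).trans hi) p.2).symm⟩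

end Option

theorem prod_factorial_mul_card_treesWithChildCounts_option [Fintype β] [Nonempty β]
    [DecidableEq β] {d : Option β → ℕ} (hd0 : d none = 0) :
    (∏ x, (d x)!) * Nat.card (treesWithChildCounts d) =
      ∑ i, d (some i) * ((∏ x, (update (d ∘ some) i (d (some i) - 1) x)!) *
        Nat.card (treesWithChildCounts (update (d ∘ some) i (d (some i) - 1)))) := by
  have hfibers : Nat.card (treesWithChildCounts d) =
      ∑ i, Nat.card {p : treesWithChildCounts d // p.1 none = some i} := by
    have : IsEmpty {p : treesWithChildCounts d // p.1 none = none} :=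
      ⟨fun p => apply_none_ne_none p.1.2 hd0 p.2⟩
    rw [← Nat.card_congr (Equiv.sigmaFiberEquiv fun p : treesWithChildCounts d => p.1 none),
      Nat.card_sigma, Fintype.sum_option, Nat.card_of_isEmpty, zero_add]
  rw [hfibers, mul_sum]
  refine sum_congr rfl fun i _ => ?_
  rcases eq_or_ne (d (some i)) 0 with hi | hi
  · have := isEmpty_leafFiber hi
    rw [Nat.card_of_isEmpty, hi, mul_zero, zero_mul]
  · have hprod := prod_factorial_eq_mul_prod_factorial_update (f := d ∘ some) hi
    simp only [comp_apply] at hprod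
    rw [Nat.card_congr (leafFiberEquiv hd0 hi), Fintype.prod_option, hd0, factorial_zero, one_mul,
      hprod, mul_assoc]

lemma treesWithChildCounts_zero_eq_univ [Unique α] :
    treesWithChildCounts (fun _ : α => 0) = Set.univ := by
  refine Set.eq_univ_of_forall fun p => ⟨⟨p default, ?_, ?_⟩, fun x => ?_⟩
  · exact fun v => iff_of_true (Subsingleton.elim _ _) (Subsingleton.elim _ _)
  · exact fun v => ⟨0, Subsingleton.elim _ _⟩
  · simp [children, Subsingleton.elim _ x]

theorem prod_factorial_mul_card_treesWithChildCounts [Fintype α] (d : α → ℕ)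
    (hd : ∑ x, d x + 1 = Fintype.card α) :
    (∏ x, (d x)!) * Nat.card (treesWithChildCounts d) = (∑ x, d x)! := by
  obtain ⟨m, hm⟩ : ∃ m, ∑ x, d x = m := ⟨_, rfl⟩
  induction m generalizing α with
  | zero =>
    have : Unique α := (Fintype.card_eq_one_iff_nonempty_unique.1 (by omega)).some
    obtain rfl : d = fun _ => 0 := funext fun x => sum_eq_zero_iff.1 hm x (mem_univ x)
    rw [treesWithChildCounts_zero_eq_univ, Nat.card_univ, Nat.card_unique, hm]
    simp
  | succ m ih =>
    classical
    obtain ⟨v, -, hv⟩ := exists_lt_of_sum_lt (s := univ) (f := d) (g := fun _ => 1) <| by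
      simpa using (by omega : ∑ x, d x < Fintype.card α)
    rw [Nat.lt_one_iff] at hv
    let e := Equiv.optionSubtypeNe v
    have hcard : Fintype.card {b // b ≠ v} = m + 1 := by
      have := Fintype.card_congr e
      rw [Fintype.card_option] at this
      omega
    have : Nonempty {b // b ≠ v} := Fintype.card_pos_iff.1 (by omega)
    let d' := d ∘ e
    have hd'0 : d' none = 0 := by simpa [d', e] using hv
    have hsum : ∑ b, d' (some b) = m + 1 := by
      rw [← hm, ← e.sum_comp, Fintype.sum_option]
      simp [d', e, hv]
    rw [hm, ← e.prod_comp, ← card_treesWithChildCounts_comp e]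
    change (∏ x, (d' x)!) * Nat.card (treesWithChildCounts d') = _
    rw [prod_factorial_mul_card_treesWithChildCounts_option hd'0, factorial_succ, ← hsum, sum_mul]
    refine sum_congr rfl fun i _ => ?_
    rcases eq_or_ne (d' (some i)) 0 with hi | hi
    · rw [hi, zero_mul, zero_mul]
    · have hsum' : ∑ b, update (d' ∘ some) i (d' (some i) - 1) b + 1 = ∑ b, d' (some b) :=
        sum_update_pred_add_one (f := d' ∘ some) hi
      have hm' : ∑ b, update (d' ∘ some) i (d' (some i) - 1) b = m := by omega
      rw [ih _ (by omega) hm', hm']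

section PlaneOrder

def rankOf [DecidableEq α] (p : α → α) (σ : ∀ x, children p x ≃ Fin (children p x).ncard)
    (v : α) : ℕ :=
  if h : p v = v then 0 else σ (p v) ⟨v, rfl, fun h' => h h'.symm⟩

lemma rankOf_apply [DecidableEq α] (p : α → α)
    (σ : ∀ x, children p x ≃ Fin (children p x).ncard) {x : α} (w : children p x) :
    rankOf p σ w = σ x w := by
  obtain ⟨w, rfl, hne⟩ := w
  exact dif_neg fun h => hne h.symm

variable {m : ℕ} (p : Fin m → Fin m)

lemma isPlaneOrder_rankOf (σ : ∀ x, children p x ≃ Fin (children p x).ncard) :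
    IsPlaneOrder m p (rankOf p σ) := by
  refine ⟨fun x => ⟨fun w hw => ?_, fun w₁ hw₁ w₂ hw₂ h => ?_, fun k hk => ?_⟩,
    fun v hv => dif_pos hv⟩
  · rw [rankOf_apply p σ ⟨w, hw⟩]
    exact (σ x _).isLt
  · rw [rankOf_apply p σ ⟨w₁, hw₁⟩, rankOf_apply p σ ⟨w₂, hw₂⟩] at h
    exact congrArg Subtype.val ((σ x).injective (Fin.ext h))
  · refine ⟨(σ x).symm ⟨k, hk⟩, ((σ x).symm _).2, ?_⟩
    rw [rankOf_apply p σ]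
    simp

noncomputable def planeOrderEquiv :
    {rk // IsPlaneOrder m p rk} ≃ ∀ x, children p x ≃ Fin (children p x).ncard where
  toFun rk x := ((rk.2.1 x).equiv rk.1).trans Fin.equivSubtype.symm
  invFun σ := ⟨rankOf p σ, isPlaneOrder_rankOf p σ⟩
  left_inv rk := Subtype.ext <| funext fun v => by
    by_cases h : p v = v
    · simp [rankOf, h, rk.2.2 v h]
    · exact dif_neg h
  right_inv σ := funext fun x => Equiv.ext fun w => Fin.ext <| rankOf_apply p σ w

instance : Finite {rk // IsPlaneOrder m p rk} := Finite.of_equiv _ (planeOrderEquiv p).symm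

theorem card_isPlaneOrder :
    Nat.card {rk // IsPlaneOrder m p rk} = ∏ x, (children p x).ncard ! := by
  rw [Nat.card_congr (planeOrderEquiv p), Nat.card_pi]
  exact prod_congr rfl fun x _ => card_equiv_fin_card

theorem card_sigma_isPlaneOrder (d : Fin m → ℕ) :
    Nat.card (Σ p : treesWithChildCounts d, {rk // IsPlaneOrder m p rk}) =
      (∏ x, (d x)!) * Nat.card (treesWithChildCounts d) := by
  have := Fintype.ofFinite (treesWithChildCounts d)
  calc _ = ∑ p : treesWithChildCounts d, ∏ x, (d x)! := by
        rw [Nat.card_sigma]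
        exact sum_congr rfl fun p _ => by simp_rw [card_isPlaneOrder, p.2.2]
    _ = _ := by rw [sum_const, Finset.card_univ, smul_eq_mul, Nat.card_eq_fintype_card, mul_comm]

end PlaneOrder

end ParentMap

theorem card_plane_trees_degree_sequence (n : ℕ) (hn : 1 ≤ n) (d : Fin n → ℕ)
    (hd : ∑ i, d i = n - 1) :
    Nat.card {pr : (Fin n → Fin n) × (Fin n → ℕ) //
        (∃ r, IsTreeRootedAt n pr.1 r) ∧ IsPlaneOrder n pr.1 pr.2 ∧
        ∀ i : Fin n, {v : Fin n | pr.1 v = i ∧ v ≠ i}.ncard = d i} =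
      (n - 1).factorial := by
  have hsplit : {pr : (Fin n → Fin n) × (Fin n → ℕ) //
        (∃ r, IsTreeRootedAt n pr.1 r) ∧ IsPlaneOrder n pr.1 pr.2 ∧
        ∀ i : Fin n, {v : Fin n | pr.1 v = i ∧ v ≠ i}.ncard = d i} ≃
      Σ p : ParentMap.treesWithChildCounts d, {rk // IsPlaneOrder n p rk} :=
    ⟨fun pr => ⟨⟨pr.1.1, pr.2.1, pr.2.2.2⟩, pr.1.2, pr.2.2.1⟩,
      fun t => ⟨(t.1.1, t.2.1), t.1.2.1, t.2.2, t.1.2.2⟩, fun _ => rfl, fun _ => rfl⟩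
  have hcard : ∑ i, d i + 1 = Fintype.card (Fin n) := by rw [hd, Fintype.card_fin]; omega
  rw [Nat.card_congr hsplit, ParentMap.card_sigma_isPlaneOrder,
    ParentMap.prod_factorial_mul_card_treesWithChildCounts d hcard, hd]
end
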